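/- arXiv:1409.4074 — 2 statements merged into one kernel-verified Lean document; each statement's English description precedes it below -/
import Mathlib

section
/- Iwahori–Hecke quadratic relation (Theorem 2): for every index i with 1 ≤ i ≤ n−1, the bowling-ball matrix M_i satisfies (q·I + M_i)(I − M_i) = 0, where I is the identity matrix; equivalently M_i² = (1 − q)·M_i + q·I. -/
open Matrix

/-- The tuple `u` with the entries in positions `i` and `i+1` interchanged
(0-indexed; returns `u` unchanged if `i+1` is out of range). -/
def swapTup (n N : ℕ) (i : ℕ) (u : Fin n → Fin (N + 1)) : Fin n → Fin (N + 1) :=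
  if h : i + 1 < n then u ∘ Equiv.swap ⟨i, Nat.lt_of_succ_lt h⟩ ⟨i + 1, h⟩ else u

/-- Jones's bowling-ball matrix `M_i` (0-indexed: `i` ranges over `0,…,n-2`,
corresponding to the lanes `i+1` and `i+2` in 1-indexed notation; it is the
identity matrix out of range).  Rows and columns are indexed by the tuples
`u : Fin n → Fin (N+1)` recording the number of balls in each lane:
`M_i e_u = e_{s_i u}` if `u i ≤ u (i+1)`, and
`M_i e_u = q • e_{s_i u} + (1-q) • e_u` if `u i > u (i+1)`. -/
def bowlM (F : Type*) [Field F] (q : F) (n N : ℕ) (i : ℕ) :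
    Matrix (Fin n → Fin (N + 1)) (Fin n → Fin (N + 1)) F :=
  if h : i + 1 < n then
    Matrix.of fun v u =>
      if u ⟨i, Nat.lt_of_succ_lt h⟩ ≤ u ⟨i + 1, h⟩ then
        (if v = swapTup n N i u then 1 else 0)
      else
        q * (if v = swapTup n N i u then 1 else 0) + (1 - q) * (if v = u then 1 else 0)
  else 1

/-!
The tuples `u` and `s_i u` span an `M_i`-stable subspace, so the relation can be checked one
column at a time. If `u` is fixed by `s_i`, then `M_i e_u = e_u`; otherwise exactly one of
`u`, `s_i u` is weakly increasing at `i`, say `u`, and on the pair `e = e_u`, `e' = e_{s_i u}`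
the matrix acts as `e ↦ e'`, `e' ↦ q e + (1 - q) e'`, whose square is `(1 - q) M_i + q` by a
two-line computation.
-/

section Hecke

variable {ι F : Type*} [DecidableEq ι] [CommRing F]

def heckeMatrix (σ : ι → ι) (up : ι → Prop) [DecidablePred up] (q : F) : Matrix ι ι F :=
  Matrix.of fun v u =>
    (if up u then Pi.single (σ u) 1 else q • Pi.single (σ u) 1 + (1 - q) • Pi.single u 1 :
      ι → F) v

variable [Fintype ι] {σ : ι → ι} {up : ι → Prop} [DecidablePred up] (q : F)

theorem heckeMatrix_mulVec_single (u : ι) :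
    heckeMatrix σ up q *ᵥ Pi.single u 1 =
      if up u then Pi.single (σ u) 1 else q • Pi.single (σ u) 1 + (1 - q) • Pi.single u 1 := by
  rw [mulVec_single_one]
  rfl

theorem heckeMatrix_mul_self (hσ : Function.Involutive σ) (hup : ∀ u, up u ∨ up (σ u))
    (hfix : ∀ u, up u → up (σ u) → σ u = u) :
    heckeMatrix σ up q * heckeMatrix σ up q = (1 - q) • heckeMatrix σ up q + q • 1 := by
  refine ext_of_mulVec_single fun u => ?_
  simp only [← mulVec_mulVec, add_mulVec, smul_mulVec, one_mulVec, heckeMatrix_mulVec_single]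
  by_cases hu : up u
  · by_cases hσu : up (σ u)
    · have hfixed : σ u = u := hfix u hu hσu
      simp only [if_pos hu, heckeMatrix_mulVec_single, hfixed]
      module
    · simp only [if_pos hu, heckeMatrix_mulVec_single, if_neg hσu, hσ u]
      module
  · have hσu : up (σ u) := (hup u).resolve_left hu
    simp only [if_neg hu, mulVec_add, mulVec_smul, heckeMatrix_mulVec_single, if_pos hσu, hσ u]
    module

end Hecke

section Bowling

variable {n N i : ℕ} (hi : i + 1 < n) (u : Fin n → Fin (N + 1))
include hi

theorem swapTup_apply_left : swapTup n N i u ⟨i, by omega⟩ = u ⟨i + 1, hi⟩ := by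
  simp [swapTup, hi]

theorem swapTup_apply_right : swapTup n N i u ⟨i + 1, hi⟩ = u ⟨i, by omega⟩ := by
  simp [swapTup, hi]

theorem swapTup_eq_self_of_eq (h : u ⟨i, by omega⟩ = u ⟨i + 1, hi⟩) : swapTup n N i u = u := by
  funext x
  simp only [swapTup, dif_pos hi, Function.comp_apply, Equiv.swap_apply_def]
  split_ifs with hx₁ hx₂ <;> simp [*]

theorem swapTup_involutive : Function.Involutive (swapTup n N i) := by
  intro u
  funext x
  simp [swapTup, hi]

theorem bowlM_eq_heckeMatrix (F : Type*) [Field F] (q : F) :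
    bowlM F q n N i =
      heckeMatrix (swapTup n N i) (fun u => u ⟨i, by omega⟩ ≤ u ⟨i + 1, hi⟩) q := by
  ext v u
  simp only [bowlM, dif_pos hi, heckeMatrix, of_apply, apply_ite (fun f : _ → F => f v),
    Pi.add_apply, Pi.smul_apply, smul_eq_mul, Pi.single_apply]

theorem bowlM_mul_self (F : Type*) [Field F] (q : F) :
    bowlM F q n N i * bowlM F q n N i = (1 - q) • bowlM F q n N i + q • 1 := by
  rw [bowlM_eq_heckeMatrix hi F q]
  refine heckeMatrix_mul_self q (swapTup_involutive hi) (fun u => ?_) (fun u hu hσu => ?_)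
  · rw [swapTup_apply_left hi, swapTup_apply_right hi]
    exact le_total _ _
  · rw [swapTup_apply_left hi, swapTup_apply_right hi] at hσu
    exact swapTup_eq_self_of_eq hi u (le_antisymm hu hσu)

end Bowling

theorem bowlM_quadratic_relation_general (F : Type*) [Field F] (q : F) (n N : ℕ)
    (i : ℕ) (hi : i + 1 < n) :
    (q • (1 : Matrix (Fin n → Fin (N + 1)) (Fin n → Fin (N + 1)) F) + bowlM F q n N i) *
      (1 - bowlM F q n N i) = 0 := by
  rw [mul_sub, mul_one, add_mul, smul_mul_assoc, one_mul, bowlM_mul_self hi F q]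
  module

/-- **Iwahori–Hecke quadratic relation (Theorem 2).**
For every index `i` (0-indexed, so `i+1 < n` corresponds to `1 ≤ i ≤ n-1`
in 1-indexed notation), the bowling-ball matrix satisfies
`(q·I + M_i)(I − M_i) = 0`. -/
theorem bowlM_quadratic_relation (F : Type*) [Field F] (q : F) (n N : ℕ)
    (hn : 2 ≤ n) (hN : 1 ≤ N) (i : ℕ) (hi : i + 1 < n) :
    (q • (1 : Matrix (Fin n → Fin (N + 1)) (Fin n → Fin (N + 1)) F) + bowlM F q n N i) *
      (1 - bowlM F q n N i) = 0 :=
  bowlM_quadratic_relation_general F q n N i hi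
end

section
/- Factorization identity (Equation (1) at the matrix level): for every index i with 1 ≤ i ≤ n−1, the alternating sum over all permutations of {1,…,n} factors as ∑_{w ∈ S_n} sgn(w)·P_w = ( ∑_{w ∈ S_n, w(i) < w(i+1)} sgn(w)·P_w ) · (I − M_i), where P_w = M_{i_1}⋯M_{i_ℓ} for any reduced word (i_1,…,i_ℓ) of w, sgn(w) = ±1 is the sign of w (viewed in F), and I is the identity matrix. -/
/-! Split the permutations by whether `w i < w (i+1)`. Right multiplication by `s_i` matches the
descents with the ascents and flips the sign. At an ascent `w`, appending `i` to a reduced word of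
`w` adds exactly one inversion, so it gives a reduced word of `w s_i` and `P (w s_i) = P w * M_i`.
Hence the descent part of the alternating sum is minus the ascent part times `M_i`. -/

open Matrix

/-- The adjacent transposition `s_i = (i, i+1)` of `Fin n`
(0-indexed; the identity permutation out of range). -/
def adjSwap (n : ℕ) (i : ℕ) : Equiv.Perm (Fin n) :=
  if h : i + 1 < n then Equiv.swap ⟨i, Nat.lt_of_succ_lt h⟩ ⟨i + 1, h⟩ else 1

/-- The number of inversions of a permutation `w` of `Fin n`:
the number of pairs `i < j` with `w j < w i`. -/
def inversions (n : ℕ) (w : Equiv.Perm (Fin n)) : ℕ :=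
  (Finset.univ.filter fun p : Fin n × Fin n => p.1 < p.2 ∧ w p.2 < w p.1).card

/-- A list `l` of indices (0-indexed, each in `{0, …, n-2}`) is a reduced word
for the permutation `w` if `w` is the composite of the corresponding adjacent
transpositions and the length of `l` equals the number of inversions of `w`. -/
def IsReducedWord (n : ℕ) (w : Equiv.Perm (Fin n)) (l : List ℕ) : Prop :=
  (∀ i ∈ l, i + 1 < n) ∧ (l.map (adjSwap n)).prod = w ∧ l.length = inversions n w

/-- The product `M_{i_1} ⋯ M_{i_ℓ}` of bowling-ball matrices along a word. -/
def prodBowlM (F : Type*) [Field F] (q : F) (n N : ℕ) (l : List ℕ) :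
    Matrix (Fin n → Fin (N + 1)) (Fin n → Fin (N + 1)) F :=
  (l.map (bowlM F q n N)).prod

section Permutations

open Equiv

theorem sum_sign_smul_eq_sum_filter_mul_one_sub {α F R : Type*} [Fintype α] [LinearOrder α]
    [CommRing F] [Ring R] [Algebra F R] {a b : α} (hab : a ≠ b) (P : Perm α → R) (M : R)
    (hP : ∀ w : Perm α, w a < w b → P (w * swap a b) = P w * M) :
    ∑ w : Perm α, ((Perm.sign w : ℤ) : F) • P w =
      (∑ w ∈ Finset.univ.filter (fun w : Perm α => w a < w b),
        ((Perm.sign w : ℤ) : F) • P w) * (1 - M) := by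
  have hsign : ∀ w : Perm α, ((Perm.sign (w * swap a b) : ℤ) : F) = -((Perm.sign w : ℤ) : F) :=
    fun w => by simp [Perm.sign_mul, Perm.sign_swap hab]
  have hdescent : ∀ w : Perm α, ¬w a < w b ↔ (w * swap a b) a < (w * swap a b) b := fun w => by
    simp only [Perm.coe_mul, Function.comp_apply, swap_apply_left, swap_apply_right, not_lt]
    exact ⟨fun h => h.lt_of_ne (w.injective.ne hab.symm), le_of_lt⟩
  rw [← Finset.sum_filter_add_sum_filter_not Finset.univ (fun w : Perm α => w a < w b),
    mul_one_sub, sub_eq_add_neg, Finset.sum_mul, ← Finset.sum_neg_distrib]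
  refine congrArg _ (Finset.sum_equiv (Equiv.mulRight (swap a b)) (by simpa using hdescent)
    fun w hw => ?_)
  have hw' := hP _ ((hdescent w).1 (Finset.mem_filter.1 hw).2)
  rw [mul_swap_mul_self] at hw'
  rw [hw', coe_mulRight, hsign, neg_smul, neg_mul, neg_neg, smul_mul_assoc]

variable {n : ℕ}

lemma adjSwap_of_lt {i : ℕ} (hi : i + 1 < n) :
    adjSwap n i = swap ⟨i, Nat.lt_of_succ_lt hi⟩ ⟨i + 1, hi⟩ :=
  dif_pos hi

lemma adjSwap_mul_self (i : ℕ) : adjSwap n i * adjSwap n i = 1 := by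
  unfold adjSwap
  split_ifs <;> simp

lemma adjSwap_symm (i : ℕ) : (adjSwap n i).symm = adjSwap n i := by
  unfold adjSwap
  split_ifs
  · exact symm_swap _ _
  · rfl

lemma adjSwap_apply_lt_adjSwap_apply {i : ℕ} {x y : Fin n} (hxy : x < y)
    (hne : ¬(x.val = i ∧ y.val = i + 1)) : adjSwap n i x < adjSwap n i y := by
  unfold adjSwap
  split_ifs
  · rw [Fin.lt_def] at hxy
    simp only [swap_apply_def, Fin.ext_iff]
    split_ifs <;> simp only [Fin.lt_def] <;> omega
  · exact hxy

def inversionPairs (w : Perm (Fin n)) : Finset (Fin n × Fin n) :=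
  Finset.univ.filter fun p => p.1 < p.2 ∧ w p.2 < w p.1

lemma inversions_eq_card_inversionPairs (w : Perm (Fin n)) :
    inversions n w = (inversionPairs w).card :=
  rfl

lemma inversions_one : inversions n 1 = 0 := by
  simp only [inversions_eq_card_inversionPairs, inversionPairs, Finset.card_eq_zero,
    Finset.filter_eq_empty_iff]
  exact fun _ _ h => lt_asymm h.1 h.2

lemma inversionPairs_mul_adjSwap {i : ℕ} (hi : i + 1 < n) {w : Perm (Fin n)}
    (hw : w ⟨i, Nat.lt_of_succ_lt hi⟩ < w ⟨i + 1, hi⟩) :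
    inversionPairs (w * adjSwap n i) =
      insert (⟨i, Nat.lt_of_succ_lt hi⟩, ⟨i + 1, hi⟩)
        ((inversionPairs w).map (prodCongr (adjSwap n i) (adjSwap n i)).toEmbedding) := by
  ext ⟨x, y⟩
  simp only [Finset.mem_insert, Finset.mem_map_equiv, inversionPairs, Finset.mem_filter,
    Finset.mem_univ, true_and]
  simp only [prodCongr_symm, prodCongr_apply, Prod.map_apply, Prod.mk.injEq, Perm.coe_mul,
    Function.comp_apply, adjSwap_symm]
  by_cases hxy : x.val = i ∧ y.val = i + 1
  · obtain ⟨rfl, rfl⟩ : x = ⟨i, Nat.lt_of_succ_lt hi⟩ ∧ y = ⟨i + 1, hi⟩ := by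
      simp [Fin.ext_iff, hxy]
    simp [adjSwap_of_lt hi, hw]
  constructor
  · exact fun ⟨hlt, hinv⟩ => .inr ⟨adjSwap_apply_lt_adjSwap_apply hlt hxy, hinv⟩
  · rintro (⟨rfl, rfl⟩ | ⟨hlt, hinv⟩)
    · simp at hxy
    refine ⟨?_, hinv⟩
    have hba : ¬((adjSwap n i x).val = i ∧ (adjSwap n i y).val = i + 1) := by
      rintro ⟨hx, hy⟩
      rw [show adjSwap n i x = ⟨i, Nat.lt_of_succ_lt hi⟩ from Fin.ext hx,
        show adjSwap n i y = ⟨i + 1, hi⟩ from Fin.ext hy] at hinv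
      exact lt_asymm hw hinv
    simpa only [← Perm.mul_apply, adjSwap_mul_self, Perm.one_apply] using
      adjSwap_apply_lt_adjSwap_apply hlt hba

lemma inversions_mul_adjSwap {i : ℕ} (hi : i + 1 < n) {w : Perm (Fin n)}
    (hw : w ⟨i, Nat.lt_of_succ_lt hi⟩ < w ⟨i + 1, hi⟩) :
    inversions n (w * adjSwap n i) = inversions n w + 1 := by
  rw [inversions_eq_card_inversionPairs, inversionPairs_mul_adjSwap hi hw,
    Finset.card_insert_of_notMem, Finset.card_map, inversions_eq_card_inversionPairs]
  simp [Finset.mem_map_equiv, inversionPairs, adjSwap_of_lt hi]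

lemma exists_descent_of_ne_one {w : Perm (Fin n)} (hw : w ≠ 1) :
    ∃ j, ∃ hj : j + 1 < n, w ⟨j + 1, hj⟩ < w ⟨j, Nat.lt_of_succ_lt hj⟩ := by
  contrapose! hw
  cases n with
  | zero => exact Subsingleton.elim _ _
  | succ m =>
    have hmono : StrictMono w := Fin.strictMono_iff_lt_succ.2 fun j =>
      (hw j (by omega)).lt_of_ne (w.injective.ne (by simp [Fin.ext_iff]))
    exact Perm.ext fun x => hmono.apply_eq

lemma IsReducedWord.concat {w : Perm (Fin n)} {l : List ℕ} (hl : IsReducedWord n w l)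
    {i : ℕ} (hi : i + 1 < n) (hw : w ⟨i, Nat.lt_of_succ_lt hi⟩ < w ⟨i + 1, hi⟩) :
    IsReducedWord n (w * adjSwap n i) (l ++ [i]) := by
  obtain ⟨hl, rfl, hlen⟩ := hl
  refine ⟨?_, by simp, by simp [hlen, inversions_mul_adjSwap hi hw]⟩
  simpa [or_imp, forall_and] using ⟨hl, hi⟩

lemma exists_isReducedWord (w : Perm (Fin n)) : ∃ l, IsReducedWord n w l := by
  induction hk : inversions n w using Nat.strong_induction_on generalizing w with
  | _ k ih =>
    by_cases hw1 : w = 1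
    · subst hw1
      exact ⟨[], by simp, by simp, by simp [inversions_one]⟩
    obtain ⟨j, hj, hdesc⟩ := exists_descent_of_ne_one hw1
    have hasc : (w * adjSwap n j) ⟨j, Nat.lt_of_succ_lt hj⟩ < (w * adjSwap n j) ⟨j + 1, hj⟩ := by
      simpa [adjSwap_of_lt hj] using hdesc
    have hmul : w * adjSwap n j * adjSwap n j = w := by rw [mul_assoc, adjSwap_mul_self, mul_one]
    have hlt : inversions n (w * adjSwap n j) < k := by
      rw [← hk, ← congrArg (inversions n) hmul, inversions_mul_adjSwap hj hasc]
      exact Nat.lt_succ_self _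
    obtain ⟨l, hl⟩ := ih _ hlt _ rfl
    exact ⟨l ++ [j], hmul ▸ hl.concat hj hasc⟩

end Permutations

lemma prodBowlM_concat (F : Type*) [Field F] (q : F) (n N : ℕ) (l : List ℕ) (i : ℕ) :
    prodBowlM F q n N (l ++ [i]) = prodBowlM F q n N l * bowlM F q n N i := by
  simp [prodBowlM]

theorem prodBowlM_alternating_sum_factorization_general (F : Type*) [Field F] (q : F) (n N : ℕ)
    (P : Equiv.Perm (Fin n) → Matrix (Fin n → Fin (N + 1)) (Fin n → Fin (N + 1)) F)
    (hP : ∀ w l, IsReducedWord n w l → P w = prodBowlM F q n N l)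
    (i : ℕ) (hi : i + 1 < n) :
    ∑ w : Equiv.Perm (Fin n), ((Equiv.Perm.sign w : ℤ) : F) • P w =
      (∑ w ∈ Finset.univ.filter
          (fun w : Equiv.Perm (Fin n) => w ⟨i, Nat.lt_of_succ_lt hi⟩ < w ⟨i + 1, hi⟩),
        ((Equiv.Perm.sign w : ℤ) : F) • P w) * (1 - bowlM F q n N i) := by
  refine sum_sign_smul_eq_sum_filter_mul_one_sub (by simp [Fin.ext_iff]) P _ fun w hw => ?_
  obtain ⟨l, hl⟩ := exists_isReducedWord w
  rw [← adjSwap_of_lt hi, hP _ _ (hl.concat hi hw), hP w l hl, prodBowlM_concat]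

/-- **Factorization identity (Equation (1) at the matrix level).**
Let `P w` be the product of bowling-ball matrices along any reduced word of
`w` (the hypothesis `hP` pins down `P` since every permutation has a
reduced word).  For every index `i` (0-indexed, `i+1 < n`), the alternating
sum over all permutations factors as
`∑_w sgn(w)·P_w = (∑_{w : w(i) < w(i+1)} sgn(w)·P_w) * (I − M_i)`. -/
theorem prodBowlM_alternating_sum_factorization (F : Type*) [Field F] (q : F) (n N : ℕ)
    (hn : 2 ≤ n) (hN : 1 ≤ N)
    (P : Equiv.Perm (Fin n) → Matrix (Fin n → Fin (N + 1)) (Fin n → Fin (N + 1)) F)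
    (hP : ∀ w l, IsReducedWord n w l → P w = prodBowlM F q n N l)
    (i : ℕ) (hi : i + 1 < n) :
    ∑ w : Equiv.Perm (Fin n), ((Equiv.Perm.sign w : ℤ) : F) • P w =
      (∑ w ∈ Finset.univ.filter
          (fun w : Equiv.Perm (Fin n) => w ⟨i, Nat.lt_of_succ_lt hi⟩ < w ⟨i + 1, hi⟩),
        ((Equiv.Perm.sign w : ℤ) : F) • P w) * (1 - bowlM F q n N i) :=
  prodBowlM_alternating_sum_factorization_general F q n N P hP i hi
end
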